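/- arXiv:2007.00482 — 4 statements merged into one kernel-verified Lean document; each statement's English description precedes it below -/
import Mathlib

section
/- Let f : X ⟶ Y be an affine natural transformation of functors from commutative rings to sets. Then f is formally étale if and only if for every commutative ring A and every element η ∈ Y(A), the ring homomorphism A → B_η classifying the projection of the corepresented fiber product to Hom(A, −) is formally étale in the sense of commutative algebra. -/
open CategoryTheory

universe u

/-- A natural transformation `f : X ⟶ Y` of functors from commutative rings to sets is
*formally étale* if for every surjective ring homomorphism `π : R' → R` with square-zero
kernel, the naturality square is a pullback square of sets. -/
def IsFormallyEtaleNT {X Y : CommRingCat.{u} ⥤ Type u} (f : X ⟶ Y) : Prop :=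
  ∀ (R' R : CommRingCat.{u}) (π : R' ⟶ R),
    Function.Surjective π →
    RingHom.ker π.hom ^ 2 = ⊥ →
    Function.Bijective (fun x' : X.obj R' =>
      (⟨(X.map π x', f.app R' x'), by exact NatTrans.naturality_apply f π x'⟩ :
        {q : X.obj R × Y.obj R' // f.app R q.1 = Y.map π q.2}))

/-- Let `f : X ⟶ Y` be an *affine* natural transformation, witnessed by: for every
commutative ring `A` and every `η ∈ Y(A)` a commutative ring `B A η`, a ring homomorphism
`u A η : A ⟶ B A η`, and natural bijections `e` identifying `Hom(B A η, R)` with the fiber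
product `X(R) ×_{Y(R)} Hom(A, R)` (over `f` and `φ ↦ Y(φ)(η)`), under which the projection
to `Hom(A, −)` is precomposition with `u A η`.  Then `f` is formally étale iff for every
`A` and `η ∈ Y(A)` the classifying ring homomorphism `u A η : A → B A η` is formally étale
in the sense of commutative algebra. -/
theorem stmt2 {X Y : CommRingCat.{u} ⥤ Type u} (f : X ⟶ Y)
    (B : ∀ A : CommRingCat.{u}, Y.obj A → CommRingCat.{u})
    (u : ∀ (A : CommRingCat.{u}) (η : Y.obj A), A ⟶ B A η)
    (e : ∀ (A : CommRingCat.{u}) (η : Y.obj A) (R : CommRingCat.{u}),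
      (B A η ⟶ R) ≃ {q : X.obj R × (A ⟶ R) // f.app R q.1 = Y.map q.2 η})
    (he_nat : ∀ (A : CommRingCat.{u}) (η : Y.obj A) (R S : CommRingCat.{u}) (ρ : R ⟶ S)
        (ψ : B A η ⟶ R),
      ((e A η S (ψ ≫ ρ)).1 : X.obj S × (A ⟶ S)) =
        (X.map ρ (e A η R ψ).1.1, (e A η R ψ).1.2 ≫ ρ))
    (he_proj : ∀ (A : CommRingCat.{u}) (η : Y.obj A) (R : CommRingCat.{u}) (ψ : B A η ⟶ R),
      (e A η R ψ).1.2 = u A η ≫ ψ) :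
    IsFormallyEtaleNT f ↔
      ∀ (A : CommRingCat.{u}) (η : Y.obj A),
        @Algebra.FormallyEtale A (B A η) _ _ (RingHom.toAlgebra (u A η).hom) := by
  constructor
  · -- forward direction
    intro hf A η
    letI : Algebra A (B A η) := (u A η).hom.toAlgebra
    rw [Algebra.FormallyEtale.iff_comp_bijective]
    intro C _ _ I hI
    let R' : CommRingCat.{u} := CommRingCat.of C
    let Rq : CommRingCat.{u} := CommRingCat.of (C ⧸ I)
    let π : R' ⟶ Rq := CommRingCat.ofHom (Ideal.Quotient.mk I)
    have hπs : Function.Surjective π := Ideal.Quotient.mk_surjective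
    have hπk : RingHom.ker π.hom ^ 2 = ⊥ := by
      rw [show RingHom.ker π.hom = I from Ideal.mk_ker]; exact hI
    obtain ⟨hinj, hsurj⟩ := hf R' Rq π hπs hπk
    let g' : A ⟶ R' := CommRingCat.ofHom (algebraMap A C)
    -- key: the second component of `e` of an `A`-algebra hom's underlying ring hom is `g'`
    have hcomm : ∀ ψ : (B A η) →ₐ[A] C, (e A η R' (CommRingCat.ofHom ψ.toRingHom)).1.2 = g' := by
      intro ψ
      rw [he_proj]
      ext a
      show ψ ((u A η).hom a) = algebraMap A C a
      rw [show (u A η).hom a = algebraMap A (B A η) a from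
        by rw [RingHom.algebraMap_toAlgebra]]
      exact ψ.commutes a
    constructor
    · intro ψ₁ ψ₂ hcomp
      have hring : ((CommRingCat.ofHom ψ₁.toRingHom) ≫ π : B A η ⟶ Rq) = (CommRingCat.ofHom ψ₂.toRingHom) ≫ π := by
        ext b
        exact AlgHom.congr_fun hcomp b
      have h1 := he_nat A η R' Rq π (CommRingCat.ofHom ψ₁.toRingHom)
      have h2 := he_nat A η R' Rq π (CommRingCat.ofHom ψ₂.toRingHom)
      have hx : X.map π (e A η R' (CommRingCat.ofHom ψ₁.toRingHom)).1.1 = X.map π (e A η R' (CommRingCat.ofHom ψ₂.toRingHom)).1.1 := by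
        rw [hring] at h1
        exact congrArg Prod.fst (h1.symm.trans h2)
      have hfx : f.app R' (e A η R' (CommRingCat.ofHom ψ₁.toRingHom)).1.1 = f.app R' (e A η R' (CommRingCat.ofHom ψ₂.toRingHom)).1.1 := by
        rw [(e A η R' (CommRingCat.ofHom ψ₁.toRingHom)).2, (e A η R' (CommRingCat.ofHom ψ₂.toRingHom)).2, hcomm ψ₁, hcomm ψ₂]
      have := hinj (Subtype.ext (congrArg₂ Prod.mk hx hfx))
      have heq : e A η R' (CommRingCat.ofHom ψ₁.toRingHom) = e A η R' (CommRingCat.ofHom ψ₂.toRingHom) := by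
        apply Subtype.ext
        refine congrArg₂ Prod.mk this ?_
        rw [hcomm ψ₁, hcomm ψ₂]
      have : (CommRingCat.ofHom ψ₁.toRingHom) = (CommRingCat.ofHom ψ₂.toRingHom) := (e A η R').injective heq
      exact AlgHom.coe_ringHom_injective (congrArg CommRingCat.Hom.hom this)
    · intro χ
      have hp : (e A η Rq (CommRingCat.ofHom χ.toRingHom)).1.2 = g' ≫ π := by
        rw [he_proj]
        ext a
        show χ ((u A η).hom a) = Ideal.Quotient.mk I (algebraMap A C a)
        rw [show (u A η).hom a = algebraMap A (B A η) a from
          by rw [RingHom.algebraMap_toAlgebra], χ.commutes a, Ideal.Quotient.mk_algebraMap]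
      have hfib : f.app Rq (e A η Rq (CommRingCat.ofHom χ.toRingHom)).1.1 = Y.map π (Y.map g' η) := by
        rw [(e A η Rq (CommRingCat.ofHom χ.toRingHom)).2, hp, FunctorToTypes.map_comp_apply]
      obtain ⟨x', hx'⟩ := hsurj ⟨((e A η Rq (CommRingCat.ofHom χ.toRingHom)).1.1, Y.map g' η), hfib⟩
      have hx'1 : X.map π x' = (e A η Rq (CommRingCat.ofHom χ.toRingHom)).1.1 :=
        congrArg (fun q => q.1.1) hx'
      have hx'2 : f.app R' x' = Y.map g' η := congrArg (fun q => q.1.2) hx'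
      let ψ' : B A η ⟶ R' := (e A η R').symm ⟨(x', g'), hx'2⟩
      have heψ' : (e A η R' ψ') = ⟨(x', g'), hx'2⟩ := (e A η R').apply_symm_apply _
      have hψ'u : ψ'.hom.comp (u A η).hom = algebraMap A C := by
        have := (he_proj A η R' ψ').symm
        rw [heψ'] at this
        exact congrArg CommRingCat.Hom.hom this
      refine ⟨⟨ψ'.hom, fun a => ?_⟩, ?_⟩
      · rw [show algebraMap A (B A η) a = (u A η).hom a from
          by rw [RingHom.algebraMap_toAlgebra]]
        exact RingHom.congr_fun hψ'u a
      · have hcomp : (ψ' ≫ π : B A η ⟶ Rq) = (CommRingCat.ofHom χ.toRingHom) := by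
          apply (e A η Rq).injective
          apply Subtype.ext
          rw [he_nat A η R' Rq π ψ', heψ']
          exact congrArg₂ Prod.mk hx'1 hp.symm
        ext b
        exact congrArg (fun g => g.hom b) hcomp
  · -- backward direction
    intro hAlg R' R π hπs hπk
    constructor
    · intro x₁ x₂ hΦ
      have h1 : X.map π x₁ = X.map π x₂ := congrArg (fun q => q.1.1) hΦ
      have h2 : f.app R' x₁ = f.app R' x₂ := congrArg (fun q => q.1.2) hΦ
      set η := f.app R' x₁ with hη
      letI : Algebra R' (B R' η) := (u R' η).hom.toAlgebra
      haveI := hAlg R' η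
      have pf₁ : f.app R' x₁ = Y.map (𝟙 R') η := by rw [FunctorToTypes.map_id_apply]
      have pf₂ : f.app R' x₂ = Y.map (𝟙 R') η := by
        rw [FunctorToTypes.map_id_apply]; exact h2.symm
      let ψ₁ : B R' η ⟶ R' := (e R' η R').symm ⟨(x₁, 𝟙 R'), pf₁⟩
      let ψ₂ : B R' η ⟶ R' := (e R' η R').symm ⟨(x₂, 𝟙 R'), pf₂⟩
      have heψ₁ : e R' η R' ψ₁ = ⟨(x₁, 𝟙 R'), pf₁⟩ := (e R' η R').apply_symm_apply _
      have heψ₂ : e R' η R' ψ₂ = ⟨(x₂, 𝟙 R'), pf₂⟩ := (e R' η R').apply_symm_apply _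
      have hu₁ : ψ₁.hom.comp (u R' η).hom = RingHom.id R' := by
        have := (he_proj R' η R' ψ₁).symm; rw [heψ₁] at this; exact congrArg CommRingCat.Hom.hom this
      have hu₂ : ψ₂.hom.comp (u R' η).hom = RingHom.id R' := by
        have := (he_proj R' η R' ψ₂).symm; rw [heψ₂] at this; exact congrArg CommRingCat.Hom.hom this
      let Ψ₁ : B R' η →ₐ[R'] R' := ⟨ψ₁.hom, fun a => by
        rw [show algebraMap R' (B R' η) a = (u R' η).hom a from
          by rw [RingHom.algebraMap_toAlgebra]]
        exact RingHom.congr_fun hu₁ a⟩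
      let Ψ₂ : B R' η →ₐ[R'] R' := ⟨ψ₂.hom, fun a => by
        rw [show algebraMap R' (B R' η) a = (u R' η).hom a from
          by rw [RingHom.algebraMap_toAlgebra]]
        exact RingHom.congr_fun hu₂ a⟩
      have hcompπ : π.hom.comp ψ₁.hom = π.hom.comp ψ₂.hom := by
        show (ψ₁ ≫ π : B R' η ⟶ R).hom = (ψ₂ ≫ π).hom
        congr 1
        apply (e R' η R).injective
        apply Subtype.ext
        rw [he_nat R' η R' R π ψ₁, he_nat R' η R' R π ψ₂, heψ₁, heψ₂]
        exact congrArg₂ Prod.mk h1 rfl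
      have : Ψ₁ = Ψ₂ :=
        Algebra.FormallyUnramified.lift_unique_of_ringHom π.hom
          ⟨2, hπk⟩ Ψ₁ Ψ₂ hcompπ
      have hψ : ψ₁ = ψ₂ := CommRingCat.hom_ext (congrArg AlgHom.toRingHom this)
      have : (⟨(x₁, 𝟙 R'), pf₁⟩ : {q : X.obj R' × (R' ⟶ R') // f.app R' q.1 = Y.map q.2 η})
          = ⟨(x₂, 𝟙 R'), pf₂⟩ := by rw [← heψ₁, ← heψ₂, hψ]
      exact congrArg (fun q => q.1.1) this
    · intro q
      obtain ⟨⟨x, η⟩, hq⟩ := q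
      letI : Algebra R' (B R' η) := (u R' η).hom.toAlgebra
      letI : Algebra R' R := π.hom.toAlgebra
      haveI := hAlg R' η
      let ψ : B R' η ⟶ R := (e R' η R).symm ⟨(x, π), hq⟩
      have heψ : e R' η R ψ = ⟨(x, π), hq⟩ := (e R' η R).apply_symm_apply _
      have huψ : ψ.hom.comp (u R' η).hom = π.hom := by
        have := (he_proj R' η R ψ).symm; rw [heψ] at this; exact congrArg CommRingCat.Hom.hom this
      let Ψ : B R' η →ₐ[R'] R := ⟨ψ.hom, fun a => by
        rw [show algebraMap R' (B R' η) a = (u R' η).hom a from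
          by rw [RingHom.algebraMap_toAlgebra]]
        exact RingHom.congr_fun huψ a⟩
      let πₐ : R' →ₐ[R'] R := ⟨π.hom, fun _ => rfl⟩
      have hnil : IsNilpotent (RingHom.ker (πₐ : (R' : Type u) →+* R)) := ⟨2, hπk⟩
      let Ψ' : B R' η →ₐ[R'] R' :=
        Algebra.FormallySmooth.liftOfSurjective Ψ πₐ hπs hnil
      have hΨ' : ∀ b, π (Ψ' b) = ψ b := fun b =>
        Algebra.FormallySmooth.liftOfSurjective_apply Ψ πₐ hπs hnil b
      let ψ' : B R' η ⟶ R' := CommRingCat.ofHom Ψ'.toRingHom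
      have hψ'u : (e R' η R' ψ').1.2 = 𝟙 R' := by
        rw [he_proj]
        ext a
        show Ψ' ((u R' η).hom a) = a
        rw [show (u R' η).hom a = algebraMap R' (B R' η) a from
          by rw [RingHom.algebraMap_toAlgebra]]
        exact Ψ'.commutes a
      have hψ'π : (ψ' ≫ π : B R' η ⟶ R) = ψ := by
        ext b; exact hΨ' b
      have hnatπ := he_nat R' η R' R π ψ'
      rw [hψ'π, heψ] at hnatπ
      refine ⟨(e R' η R' ψ').1.1, ?_⟩
      apply Subtype.ext
      refine congrArg₂ Prod.mk (congrArg Prod.fst hnatπ).symm ?_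
      show f.app R' (e R' η R' ψ').1.1 = η
      rw [(e R' η R' ψ').2, hψ'u, FunctorToTypes.map_id_apply]
end

section
/- The augmentation ε : ℂ[ℚ≥0] → ℂ, from the monoid algebra over ℂ of the additive monoid of nonnegative rational numbers, sending the basis element t^q to 0 for every q > 0 (and t^0 to 1), is formally étale: ℂ, regarded as a ℂ[ℚ≥0]-algebra via ε, is a formally étale algebra over ℂ[ℚ≥0]. -/
open scoped NNRat

/-- The multiplicative monoid homomorphism `Multiplicative ℚ≥0 →* ℂ` sending `q` to `1` if
`q = 0` and to `0` otherwise; it induces the augmentation of the monoid algebra `ℂ[ℚ≥0]`. -/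
noncomputable def augAux : Multiplicative ℚ≥0 →* ℂ where
  toFun q := if Multiplicative.toAdd q = 0 then 1 else 0
  map_one' := by simp
  map_mul' x y := by
    simp only [toAdd_mul]
    rcases eq_or_ne (Multiplicative.toAdd x) 0 with hx | hx <;>
      rcases eq_or_ne (Multiplicative.toAdd y) 0 with hy | hy <;>
        simp [hx, hy, add_eq_zero]

/-- The augmentation `ε : ℂ[ℚ≥0] → ℂ` of the monoid algebra over `ℂ` of the additive monoid
of nonnegative rational numbers, sending the basis element `t^q` to `0` for `q > 0` and
`t^0` to `1`. -/
noncomputable def augmentation : AddMonoidAlgebra ℂ ℚ≥0 →ₐ[ℂ] ℂ :=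
  AddMonoidAlgebra.lift ℂ ℂ ℚ≥0 augAux

/-- On basis elements, the augmentation sends `t^q` to `0` for `q ≠ 0` and `t^0` to `1`. -/
theorem augmentation_single (q : ℚ≥0) :
    augmentation (AddMonoidAlgebra.single q 1) = if q = 0 then 1 else 0 := by
  simp [augmentation, augAux, AddMonoidAlgebra.lift_single]

theorem augmentation_single' (q : ℚ≥0) (c : ℂ) :
    augmentation (AddMonoidAlgebra.single q c) = if q = 0 then c else 0 := by
  simp [augmentation, augAux, AddMonoidAlgebra.lift_single, mul_comm]

/-- The augmentation reads off the coefficient at `0`. -/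
theorem augmentation_apply (x : AddMonoidAlgebra ℂ ℚ≥0) : augmentation x = x.coeff 0 := by
  induction x using AddMonoidAlgebra.induction with
  | zero => simp
  | single_add q c f hq hc ih =>
      rw [map_add, ih]
      simp [augmentation_single', Finsupp.single_apply, eq_comm]

/-- `ℂ`, regarded as a `ℂ[ℚ≥0]`-algebra via the augmentation `ε`, is formally étale over
the monoid algebra `ℂ[ℚ≥0]`. -/
theorem stmt3 :
    @Algebra.FormallyEtale (AddMonoidAlgebra ℂ ℚ≥0) ℂ _ _
      (RingHom.toAlgebra augmentation.toRingHom) := by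
  letI : Algebra (AddMonoidAlgebra ℂ ℚ≥0) ℂ := RingHom.toAlgebra augmentation.toRingHom
  set R := AddMonoidAlgebra ℂ ℚ≥0
  have hεmap : ∀ x : R, algebraMap R ℂ x = augmentation x := fun _ => rfl
  rw [Algebra.FormallyEtale.iff_comp_bijective]
  intro B _ _ I hI
  set φ := algebraMap R B with hφ
  -- elements of the augmentation kernel land in `I`
  constructor
  · -- injectivity
    intro g₁ g₂ _
    ext c
    have h1 := g₁.commutes (AddMonoidAlgebra.single 0 c)
    have h2 := g₂.commutes (AddMonoidAlgebra.single 0 c)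
    rw [hεmap, augmentation_single'] at h1 h2
    norm_num at h1 h2
    rw [h1, h2]
  · -- surjectivity
    intro f
    have hmem : ∀ y : R, augmentation y = 0 → φ y ∈ I := by
      intro y hy
      have hc := f.commutes y
      rw [hεmap, hy, map_zero] at hc
      have hc' : Ideal.Quotient.mk I (φ y) = 0 := hc.symm
      exact Ideal.Quotient.eq_zero_iff_mem.mp hc'
    -- φ kills single q c for q ≠ 0
    have hS : ∀ (q : ℚ≥0) (c : ℂ), q ≠ 0 → φ (AddMonoidAlgebra.single q c) = 0 := by
      intro q c hq
      have hhalf : q / 2 ≠ 0 := by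
        simpa using hq
      have hsplit : (AddMonoidAlgebra.single q c : R) =
          AddMonoidAlgebra.single (q / 2) 1 * AddMonoidAlgebra.single (q / 2) c := by
        rw [AddMonoidAlgebra.single_mul_single, one_mul]
        congr 1
        rw [← two_mul] at *
        field_simp
      have h1 : φ (AddMonoidAlgebra.single (q / 2) 1) ∈ I :=
        hmem _ (by rw [augmentation_single', if_neg hhalf])
      have h2 : φ (AddMonoidAlgebra.single (q / 2) c) ∈ I :=
        hmem _ (by rw [augmentation_single', if_neg hhalf])
      have : φ (AddMonoidAlgebra.single q c) ∈ I ^ 2 := by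
        rw [hsplit, map_mul, pow_two]
        exact Ideal.mul_mem_mul h1 h2
      rw [hI] at this
      exact this
    -- φ kills the whole augmentation kernel
    have hK : ∀ x : R, augmentation x = 0 → φ x = 0 := by
      intro x hx
      calc φ x = φ (x.coeff.sum fun q c => AddMonoidAlgebra.single q c) := by
            rw [AddMonoidAlgebra.sum_coeff_single]
        _ = x.coeff.sum fun q c => φ (AddMonoidAlgebra.single q c) := map_finsuppSum φ _ _
        _ = 0 := by
            apply Finset.sum_eq_zero
            intro q hqs
            have hq : q ≠ 0 := by
              rintro rfl
              rw [augmentation_apply] at hx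
              exact Finsupp.mem_support_iff.mp hqs hx
            exact hS q (x.coeff q) hq
    -- construct the lift
    refine ⟨⟨φ.comp AddMonoidAlgebra.singleZeroRingHom, ?_⟩, ?_⟩
    · intro r
      show φ (AddMonoidAlgebra.single 0 (algebraMap R ℂ r)) = φ r
      rw [hεmap]
      rw [← sub_eq_zero, ← map_sub]
      apply hK
      rw [map_sub, augmentation_single']
      simp
    · ext c
      show Ideal.Quotient.mk I (φ (AddMonoidAlgebra.single 0 c)) = f c
      have hc := f.commutes (AddMonoidAlgebra.single 0 c)
      rw [hεmap, augmentation_single'] at hc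
      norm_num at hc
      exact hc.symm
end

section
/- ℂ, regarded as a module over the monoid algebra R = ℂ[ℚ≥0] via the augmentation ε sending t^q to 0 for q > 0, is not a flat R-module. (Hence the formally étale ring map ε : ℂ[ℚ≥0] → ℂ is not flat, so formally étale ring homomorphisms need not be flat.) -/
open scoped NNRat TensorProduct

/-- A flat module over a domain is torsion-free: any nonzero element of the ring acts
injectively. -/
lemma flat_isSMulRegular {R M : Type*} [CommRing R] [NoZeroDivisors R] [AddCommGroup M]
    [Module R M] [Module.Flat R M] {r : R} (hr : r ≠ 0) : IsSMulRegular M r := by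
  have hregR : IsSMulRegular R r := fun a b hab =>
    mul_left_cancel₀ hr (show r * a = r * b from hab)
  exact ((TensorProduct.lid R M).isSMulRegular_congr r).mp (hregR.rTensor M)

set_option maxHeartbeats 1000000

/-- `ℂ`, regarded as a module over the monoid algebra `R = ℂ[ℚ≥0]` via the augmentation
`ε`, is not a flat `R`-module. -/
theorem stmt4 :
    ¬ @Module.Flat (AddMonoidAlgebra ℂ ℚ≥0) ℂ _ _
      (@Algebra.toModule _ _ _ _ (RingHom.toAlgebra augmentation.toRingHom)) := by
  intro hflat
  letI : Algebra (AddMonoidAlgebra ℂ ℚ≥0) ℂ := RingHom.toAlgebra augmentation.toRingHom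
  set r : AddMonoidAlgebra ℂ ℚ≥0 := AddMonoidAlgebra.single 1 1 with hr
  have hrne : r ≠ 0 := fun h => one_ne_zero (AddMonoidAlgebra.single_eq_zero.mp (hr ▸ h))
  have hregC : IsSMulRegular ℂ r :=
    @flat_isSMulRegular (AddMonoidAlgebra ℂ ℚ≥0) ℂ _ _ _ _ hflat r hrne
  have h1 : r • (1:ℂ) = r • (0:ℂ) := by
    rw [smul_zero]
    have h2 : r • (1:ℂ) = augmentation r * 1 := rfl
    rw [h2, mul_one]
    simpa using augmentation_single 1
  exact one_ne_zero (hregC h1)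
end

section
/- Let F be an algebraic closure of 𝔽₃ and R = F[ε] the ring of dual numbers over F (ε² = 0). Let E₁ and E₂ be the Weierstrass curves over R defined by y² = x³ + x² + x + (1 + ε) and y² = x³ + x² + x + (1 − ε) respectively. Then the discriminants Δ(E₁) and Δ(E₂) are units of R, and the j-invariants of E₁ and E₂ are distinct: j(E₁) ≠ j(E₂). -/
/-- `F` is an algebraic closure of `𝔽₃`. -/
abbrev F : Type := AlgebraicClosure (ZMod 3)

/-- The Weierstrass curve `E₁ : y² = x³ + x² + x + (1 + ε)` over the dual numbers `F[ε]`. -/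
noncomputable def E₁ : WeierstrassCurve (DualNumber F) :=
  { a₁ := 0, a₂ := 1, a₃ := 0, a₄ := 1, a₆ := 1 + DualNumber.eps }

/-- The Weierstrass curve `E₂ : y² = x³ + x² + x + (1 − ε)` over the dual numbers `F[ε]`. -/
noncomputable def E₂ : WeierstrassCurve (DualNumber F) :=
  { a₁ := 0, a₂ := 1, a₃ := 0, a₄ := 1, a₆ := 1 - DualNumber.eps }

lemma three_eq_zero : (3 : DualNumber F) = 0 := by
  have h : (3 : F) = 0 := by
    have := CharP.cast_eq_zero F 3
    simpa using this
  rw [show (3 : DualNumber F) = algebraMap F (DualNumber F) 3 from (map_ofNat _ 3).symm,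
    h, map_zero]

lemma eps_sq : (DualNumber.eps : DualNumber F) * DualNumber.eps = 0 :=
  DualNumber.eps_mul_eps

lemma eps_ne_zero' : (DualNumber.eps : DualNumber F) ≠ 0 := by
  intro h
  have := congrArg TrivSqZeroExt.snd h
  rw [DualNumber.snd_eps, TrivSqZeroExt.snd_zero] at this
  exact one_ne_zero this

lemma hΔ1 : E₁.Δ = -1 - DualNumber.eps := by
  simp only [WeierstrassCurve.Δ, WeierstrassCurve.b₂, WeierstrassCurve.b₄,
    WeierstrassCurve.b₆, WeierstrassCurve.b₈, E₁]
  linear_combination (-85 - 213 * DualNumber.eps) * three_eq_zero + (-432 : DualNumber F) * eps_sq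

lemma hΔ2 : E₂.Δ = -1 + DualNumber.eps := by
  simp only [WeierstrassCurve.Δ, WeierstrassCurve.b₂, WeierstrassCurve.b₄,
    WeierstrassCurve.b₆, WeierstrassCurve.b₈, E₂]
  linear_combination (-85 + 213 * DualNumber.eps) * three_eq_zero + (-432 : DualNumber F) * eps_sq

lemma hΔmul : E₁.Δ * E₂.Δ = 1 := by
  rw [hΔ1, hΔ2]
  linear_combination (-1 : DualNumber F) * eps_sq

lemma hc1 : E₁.c₄ = 1 := by
  simp only [WeierstrassCurve.c₄, WeierstrassCurve.b₂, WeierstrassCurve.b₄, E₁]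
  linear_combination (-11 : DualNumber F) * three_eq_zero

lemma hc2 : E₂.c₄ = 1 := by
  simp only [WeierstrassCurve.c₄, WeierstrassCurve.b₂, WeierstrassCurve.b₄, E₂]
  linear_combination (-11 : DualNumber F) * three_eq_zero

/-- The discriminants of `E₁` and `E₂` are units of `F[ε]`, and their j-invariants
`j = Δ⁻¹ · c₄³` are distinct. -/
theorem stmt6 :
    IsUnit E₁.Δ ∧ IsUnit E₂.Δ ∧
      ∀ u₁ u₂ : (DualNumber F)ˣ, (u₁ : DualNumber F) = E₁.Δ → (u₂ : DualNumber F) = E₂.Δ →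
        (↑u₁⁻¹ : DualNumber F) * E₁.c₄ ^ 3 ≠ (↑u₂⁻¹ : DualNumber F) * E₂.c₄ ^ 3 := by
  have hmul := hΔmul
  have hmul' : E₂.Δ * E₁.Δ = 1 := by rw [mul_comm]; exact hmul
  refine ⟨IsUnit.of_mul_eq_one _ hmul, IsUnit.of_mul_eq_one _ hmul', ?_⟩
  intro u₁ u₂ h1 h2 h
  rw [hc1, hc2, one_pow, mul_one, mul_one] at h
  have hinv : u₁⁻¹ = u₂⁻¹ := Units.ext h
  have hu : u₁ = u₂ := by simpa using congrArg (·⁻¹) hinv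
  have hΔeq : E₁.Δ = E₂.Δ := by rw [← h1, ← h2, hu]
  rw [hΔ1, hΔ2] at hΔeq
  have h2e : (DualNumber.eps : DualNumber F) = 0 := by
    linear_combination (-2 : DualNumber F) * hΔeq - DualNumber.eps * three_eq_zero
  exact eps_ne_zero' h2e
end
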